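/- arXiv:1803.09594 — 3 statements merged into one kernel-verified Lean document; each statement's English description precedes it below -/
import Mathlib

section
/- Let a, b be distinct complex numbers, n ≥ 4 an integer, and P(z) = ∫₀^{z-a}(t-a)^n(t-b)^4 dt + 1. Then P(a) ≠ P(b); that is, P satisfies Fujimoto's property (H) (P is critically injective). -/
/-!
Substituting `t = a + s (b - a)` turns `P(b) - P(a) = ∫_a^b (t - a)^n (t - b)^m dt` into
`(b - a)^(n+m+1) ∫₀¹ sⁿ (s - 1)^m ds`, a Beta integral whose real integrand has the constant
sign `(-1)^m` on `(0, 1)`; hence it does not vanish.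
-/

open Polynomial

theorem Polynomial.eval_sub_eval_eq_integral (P : ℂ[X]) (a b : ℂ) :
    P.eval b - P.eval a = ∫ s in (0 : ℝ)..1, (b - a) * P.derivative.eval (a + s * (b - a)) := by
  have hline (s : ℝ) : HasDerivAt (fun s : ℝ ↦ a + s * (b - a)) (b - a) s :=
    ((hasDerivAt_id s).ofReal_comp.mul_const (b - a)).const_add a |>.congr_deriv (by simp)
  have hderiv (s : ℝ) : HasDerivAt (fun s : ℝ ↦ P.eval (a + s * (b - a)))
      ((b - a) * P.derivative.eval (a + s * (b - a))) s :=
    ((P.hasDerivAt _).comp s (hline s)).congr_deriv (mul_comm _ _)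
  rw [intervalIntegral.integral_eq_sub_of_hasDerivAt (fun s _ ↦ hderiv s)
    ((by fun_prop : Continuous _).intervalIntegrable 0 1)]
  simp

theorem integral_pow_mul_sub_one_pow_ne_zero (n m : ℕ) :
    ∫ s in (0 : ℝ)..1, s ^ n * (s - 1) ^ m ≠ 0 := by
  have hpos : 0 < ∫ s in (0 : ℝ)..1, s ^ n * (1 - s) ^ m :=
    intervalIntegral.intervalIntegral_pos_of_pos_on
      ((by fun_prop : Continuous _).intervalIntegrable 0 1)
      (fun s hs ↦ mul_pos (pow_pos hs.1 n) (pow_pos (sub_pos.2 hs.2) m)) one_pos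
  have hflip : ∫ s in (0 : ℝ)..1, s ^ n * (s - 1) ^ m
      = (-1) ^ m * ∫ s in (0 : ℝ)..1, s ^ n * (1 - s) ^ m := by
    rw [← intervalIntegral.integral_const_mul]
    congr 1 with s
    rw [← neg_sub 1 s, neg_pow]
    ring
  rw [hflip]
  exact mul_ne_zero (pow_ne_zero _ (by norm_num)) hpos.ne'

theorem Polynomial.eval_sub_eval_of_derivative_eq {P : ℂ[X]} {a b : ℂ} {n m : ℕ}
    (hP' : P.derivative = (X - C a) ^ n * (X - C b) ^ m) :
    P.eval b - P.eval a = (b - a) ^ (n + m + 1) * ∫ s in (0 : ℝ)..1, (s ^ n * (s - 1) ^ m : ℝ) := by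
  rw [P.eval_sub_eval_eq_integral, ← intervalIntegral.integral_ofReal,
    ← intervalIntegral.integral_const_mul, hP']
  congr 1 with s
  have hsub_a : a + s * (b - a) - a = s * (b - a) := by ring
  have hsub_b : a + s * (b - a) - b = (s - 1) * (b - a) := by ring
  simp only [eval_mul, eval_pow, eval_sub, eval_X, eval_C, hsub_a, hsub_b, mul_pow]
  push_cast
  ring

theorem stmt_3_general (a b : ℂ) (hab : a ≠ b) (n : ℕ)
    (P : ℂ[X])
    (hP' : P.derivative = (X - C a) ^ n * (X - C b) ^ 4) :
    P.eval a ≠ P.eval b := by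
  intro h
  have hincr := eval_sub_eval_of_derivative_eq hP'
  rw [h, sub_self, eq_comm] at hincr
  exact mul_ne_zero (pow_ne_zero _ (sub_ne_zero.2 hab.symm))
    (Complex.ofReal_ne_zero.2 (integral_pow_mul_sub_one_pow_ne_zero n 4)) hincr

/-- `P(a) ≠ P(b)`, i.e. `P` is critically injective (property (H)). -/
theorem stmt_3 (a b : ℂ) (hab : a ≠ b) (n : ℕ) (hn : 4 ≤ n)
    (P : ℂ[X])
    (hP' : P.derivative = (X - C a) ^ n * (X - C b) ^ 4)
    (hPa : P.eval a = 1) :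
    P.eval a ≠ P.eval b :=
  stmt_3_general a b hab n P hP'
end

section
/- Let c ∈ ℂ*, ζ ∈ ℂ with ζ⁹ = 1, and a, b, d ∈ ℂ*. Suppose e^c = ζ. Define f(z) = a·e^z / (b - d·sin²(πz/c)). Then the set of points where f(z)⁹ = 1 equals the set of points where f(z+c)⁹ = 1 (indeed f(z+c)⁹ = f(z)⁹ for all z where defined), but if ζ ≠ 1 then f(z+c) ≢ f(z). -/
open Complex

/-! The shift `z ↦ z + c` turns `πz/c` into `πz/c + π`, which only flips the sign of the sine, so
`f (z + c) = e^c f z = ζ f z`. Raising to the ninth power kills `ζ`, while `f 0 = a / b ≠ 0`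
shows that `f` itself is not `c`-periodic unless `ζ = 1`. -/

theorem sin_sq_pi_mul_div_add_self {c : ℂ} (hc : c ≠ 0) (z : ℂ) :
    sin (Real.pi * (z + c) / c) ^ 2 = sin (Real.pi * z / c) ^ 2 := by
  have hshift : (Real.pi : ℂ) * (z + c) / c = Real.pi * z / c + Real.pi := by
    field_simp
  rw [hshift, sin_add_pi, neg_sq]

section QuasiPeriodic

variable {α M : Type*} [Add α] {g : α → M} {c : α} {ζ : M}

theorem pow_map_add_eq_of_map_add_eq_mul [CommMonoid M] (hg : ∀ z, g (z + c) = ζ * g z)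
    {n : ℕ} (hζ : ζ ^ n = 1) (z : α) : g (z + c) ^ n = g z ^ n := by
  rw [hg, mul_pow, hζ, one_mul]

theorem not_periodic_of_map_add_eq_mul [MonoidWithZero M] [IsRightCancelMulZero M]
    (hg : ∀ z, g (z + c) = ζ * g z) {z₀ : α} (hz₀ : g z₀ ≠ 0) (hζ : ζ ≠ 1) :
    ¬ ∀ z, g (z + c) = g z := fun hper =>
  hζ <| mul_right_cancel₀ hz₀ <| by rw [← hg, hper, one_mul]

end QuasiPeriodic

theorem stmt_10_general (c : ℂ) (hc : c ≠ 0) (ζ : ℂ) (hζ : ζ ^ 9 = 1)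
    (a b d : ℂ) (ha : a ≠ 0) (hb : b ≠ 0)
    (hec : Complex.exp c = ζ)
    (f : ℂ → ℂ)
    (hf : ∀ z : ℂ, f z =
      a * Complex.exp z / (b - d * (Complex.sin (Real.pi * z / c)) ^ 2)) :
    ({z : ℂ | f z ^ 9 = 1} = {z : ℂ | f (z + c) ^ 9 = 1}) ∧
      (∀ z : ℂ, f (z + c) ^ 9 = f z ^ 9) ∧
      (ζ ≠ 1 → ¬ (∀ z : ℂ, f (z + c) = f z)) := by
  have hshift : ∀ z, f (z + c) = ζ * f z := fun z => by
    rw [hf, hf, sin_sq_pi_mul_div_add_self hc, exp_add, hec]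
    ring
  have hpow := pow_map_add_eq_of_map_add_eq_mul hshift hζ
  have hf₀ : f 0 ≠ 0 := by simp [hf, ha, hb]
  exact ⟨by simp only [hpow], hpow, not_periodic_of_map_add_eq_mul hshift hf₀⟩

/-- with `ζ⁹ = 1`, `e^c = ζ`, and
`f(z) = a e^z / (b - d sin²(πz/c))`, the 9th powers satisfy `f(z+c)⁹ = f(z)⁹`
(so `{f⁹ = 1}` is shift invariant), but if `ζ ≠ 1` then `f(z+c) ≢ f(z)`. -/
theorem stmt_10 (c : ℂ) (hc : c ≠ 0) (ζ : ℂ) (hζ : ζ ^ 9 = 1)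
    (a b d : ℂ) (ha : a ≠ 0) (hb : b ≠ 0) (hd : d ≠ 0)
    (hec : Complex.exp c = ζ)
    (f : ℂ → ℂ)
    (hf : ∀ z : ℂ, f z =
      a * Complex.exp z / (b - d * (Complex.sin (Real.pi * z / c)) ^ 2)) :
    ({z : ℂ | f z ^ 9 = 1} = {z : ℂ | f (z + c) ^ 9 = 1}) ∧
      (∀ z : ℂ, f (z + c) ^ 9 = f z ^ 9) ∧
      (ζ ≠ 1 → ¬ (∀ z : ℂ, f (z + c) = f z)) :=
  stmt_10_general c hc ζ hζ a b d ha hb hec f hf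
end

section
/- Let c ∈ ℂ* and f(z) = exp(cos(πz/c)). Then f(z+c) = exp(-cos(πz/c)) = 1/f(z), so f(z)·f(z+c) = 1 for all z, the zero sets of f(z)⁷ - 1 and f(z+c)⁷ - 1 coincide, and the preimage of {0,1} under f equals the preimage of {0,1} under f(·+c); yet f(z+c) ≢ f(z). -/
/-! Shifting `z` by `c` shifts `πz/c` by `π`, which negates the cosine, so `f(z + c) = 1/f(z)`.
An element and its inverse are simultaneously `7`-th roots of unity, and simultaneously equal
to `1` (neither is `0`). Finally `f(c) = e⁻¹ ≠ e = f(0)`. -/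

open Complex

section MulEqOne

variable {M : Type*}

theorem pow_eq_one_iff_pow_eq_one_of_mul_eq_one [CommMonoid M] {a b : M} (h : a * b = 1)
    (n : ℕ) : a ^ n = 1 ↔ b ^ n = 1 :=
  eq_one_iff_eq_one_of_mul_eq_one (by rw [← mul_pow, h, one_pow])

theorem mem_zero_one_iff_of_mul_eq_one [MulZeroOneClass M] [Nontrivial M] {a b : M}
    (h : a * b = 1) : a ∈ ({0, 1} : Set M) ↔ b ∈ ({0, 1} : Set M) := by
  simp only [Set.mem_insert_iff, Set.mem_singleton_iff, left_ne_zero_of_mul_eq_one h,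
    right_ne_zero_of_mul_eq_one h, false_or]
  exact eq_one_iff_eq_one_of_mul_eq_one h

end MulEqOne

theorem Complex.cos_pi_mul_add_self_div {c : ℂ} (hc : c ≠ 0) (z : ℂ) :
    cos (Real.pi * (z + c) / c) = -cos (Real.pi * z / c) := by
  rw [← cos_add_pi]
  congr 1
  field_simp

theorem Complex.exp_neg_ofReal_ne_exp {x : ℝ} (hx : x ≠ 0) : exp (-x) ≠ exp x := by
  rw [← ofReal_neg, ← ofReal_exp, ← ofReal_exp, Ne, ofReal_inj, Real.exp_eq_exp]
  intro h
  exact hx (by linarith)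

/-- for `f(z) = exp(cos(πz/c))`: `f(z+c) = exp(-cos(πz/c)) = 1/f(z)`,
`f(z)·f(z+c) = 1`, the zero sets of `f⁷ - 1` and `f(·+c)⁷ - 1` coincide, the
preimages of `{0,1}` under `f` and `f(·+c)` coincide, yet `f(z+c) ≢ f(z)`. -/
theorem stmt_11 (c : ℂ) (hc : c ≠ 0)
    (f : ℂ → ℂ)
    (hf : ∀ z : ℂ, f z = Complex.exp (Complex.cos (Real.pi * z / c))) :
    (∀ z : ℂ, f (z + c) = Complex.exp (-Complex.cos (Real.pi * z / c))) ∧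
      (∀ z : ℂ, f z * f (z + c) = 1) ∧
      ({z : ℂ | f z ^ 7 - 1 = 0} = {z : ℂ | f (z + c) ^ 7 - 1 = 0}) ∧
      (f ⁻¹' {0, 1} = (fun z => f (z + c)) ⁻¹' {0, 1}) ∧
      ¬ (∀ z : ℂ, f (z + c) = f z) := by
  have shift (z : ℂ) : f (z + c) = exp (-cos (Real.pi * z / c)) := by
    rw [hf, cos_pi_mul_add_self_div hc]
  have mul_shift (z : ℂ) : f z * f (z + c) = 1 := by
    rw [hf, shift, ← exp_add, add_neg_cancel, exp_zero]
  refine ⟨shift, mul_shift, ?_, ?_, ?_⟩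
  · ext z
    simpa only [Set.mem_ofPred_eq, sub_eq_zero]
      using pow_eq_one_iff_pow_eq_one_of_mul_eq_one (mul_shift z) 7
  · ext z
    exact mem_zero_one_iff_of_mul_eq_one (mul_shift z)
  · intro h
    have h0 := h 0
    rw [shift, hf, mul_zero, zero_div, cos_zero] at h0
    exact exp_neg_ofReal_ne_exp one_ne_zero (by rwa [ofReal_one])
end
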